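/- Let V be a module over the twisted N=1 Schrödinger-Neveu-Schwarz algebra and suppose v ∈ V satisfies G_{-1/2}v = Y_{-1/2}v = M_{-1/2}v = 0 and Y_p v = M_p v = 0 for all p ∈ (1/2)ℤ with p > 0. Then Y_0 v = M_0 v = 0, and hence Y_p v = M_p v = 0 for all p ∈ (1/2)ℤ. -/
import Mathlib


noncomputable section

/-- Basis of the twisted N=1 Schrodinger-Neveu-Schwarz algebra.
`L n` is L_n, `G k` is G_{k+1/2}, `Y p` is Y_{p/2}, `M p` is M_{p/2}, `C` is the central element. -/
inductive B : Type
  | L : ℤ → B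
  | G : ℤ → B
  | Y : ℤ → B
  | M : ℤ → B
  | C : B
deriving DecidableEq

/-- The underlying vector space of tsns. -/
abbrev V := B →₀ ℂ

/-- Basis vectors. -/
def e (x : B) : V := Finsupp.single x 1

/-- Parity of a basis element. -/
def isOdd : B → Bool
  | .G _ => true
  | .Y p => if p % 2 = 0 then false else true
  | .M p => if p % 2 = 0 then false else true
  | _ => false

/-- The Koszul sign (-1)^{|x||y|}. -/
def sgn (x y : B) : ℂ := if isOdd x && isOdd y then -1 else 1

/-- The super-bracket on basis elements of tsns. -/
def bb : B → B → V
  | .L n, .L m => ((m : ℂ) - n) • e (.L (n+m)) +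
      (if m = -n then (((n:ℂ)^3 - (n:ℂ))/12) • e B.C else 0)
  | .L n, .G k => ((k : ℂ) + 1/2 - (n:ℂ)/2) • e (.G (k+n))
  | .G k, .L n => (-((k : ℂ) + 1/2 - (n:ℂ)/2)) • e (.G (k+n))
  | .G k, .G l => (2:ℂ) • e (.L (k+l+1)) +
      (if l = -k-1 then ((1 - 4*((k:ℂ)+1/2)^2)/12) • e B.C else 0)
  | .L n, .Y p => (if p % 2 = 0 then (p:ℂ)/2 - (n:ℂ)/2 else (p:ℂ)/2) • e (.Y (p + 2*n))
  | .Y p, .L n => (-(if p % 2 = 0 then (p:ℂ)/2 - (n:ℂ)/2 else (p:ℂ)/2)) • e (.Y (p + 2*n))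
  | .L n, .M p => (if p % 2 = 0 then (p:ℂ)/2 else (p:ℂ)/2 + (n:ℂ)/2) • e (.M (p + 2*n))
  | .M p, .L n => (-(if p % 2 = 0 then (p:ℂ)/2 else (p:ℂ)/2 + (n:ℂ)/2)) • e (.M (p + 2*n))
  | .G k, .Y p => (if p % 2 = 0 then ((p:ℂ)/2 - ((k:ℂ)+1/2))/2 else 2) • e (.Y (p + 2*k + 1))
  | .Y p, .G k => (if p % 2 = 0 then -(((p:ℂ)/2 - ((k:ℂ)+1/2))/2) else 2) • e (.Y (p + 2*k + 1))
  | .G k, .M p => (if p % 2 = 0 then (p:ℂ)/4 else 2) • e (.M (p + 2*k + 1))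
  | .M p, .G k => (if p % 2 = 0 then -((p:ℂ)/4) else 2) • e (.M (p + 2*k + 1))
  | .Y p, .Y q => (if p % 2 = 0 then (if q % 2 = 0 then ((q:ℂ) - p)/4 else (q:ℂ)/4)
      else (if q % 2 = 0 then -((p:ℂ)/4) else 2)) • e (.M (p + q))
  | _, _ => 0

/-- Bilinear extension of the bracket to all of tsns. -/
def br (f g : V) : V := f.sum fun x a => g.sum fun y b => (a * b) • bb x y

/-- Linear extension of an assignment of operators to basis elements. -/
def ext {W : Type} [AddCommGroup W] [Module ℂ W] (ρ : B → Module.End ℂ W) (f : V) :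
    Module.End ℂ W := f.sum fun x a => a • ρ x

/-- A module (representation) over the twisted N=1 Schrodinger-Neveu-Schwarz algebra. -/
structure TsnsRep (W : Type) [AddCommGroup W] [Module ℂ W] where
  ρ : B → Module.End ℂ W
  compat : ∀ x y : B, ext ρ (bb x y) = ρ x * ρ y - sgn x y • (ρ y * ρ x)

/-- Simplicity (irreducibility) of a tsns-module. -/
def TsnsSimple {W : Type} [AddCommGroup W] [Module ℂ W] (r : TsnsRep W) : Prop :=
  (∃ w : W, w ≠ 0) ∧
    ∀ U : Submodule ℂ W, (∀ x : B, ∀ u ∈ U, r.ρ x u ∈ U) → U = ⊥ ∨ U = ⊤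


lemma ext_smul_e {W : Type} [AddCommGroup W] [Module ℂ W] (ρ : B → Module.End ℂ W)
    (c : ℂ) (x : B) : ext ρ (c • e x) = c • ρ x := by
  classical
  simp [ext, e, Finsupp.smul_single, Finsupp.sum_single_index]

lemma comm_apply {W : Type} [AddCommGroup W] [Module ℂ W] (r : TsnsRep W) (x y : B) (v : W) :
    ext r.ρ (bb x y) v = r.ρ x (r.ρ y v) - sgn x y • r.ρ y (r.ρ x v) := by
  have h := congrArg (fun f : Module.End ℂ W => f v) (r.compat x y)
  simpa using h

lemma two_smul_zero {W : Type} [AddCommGroup W] [Module ℂ W] {w : W}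
    (h : (2:ℂ) • w = 0) : w = 0 := by
  rcases smul_eq_zero.mp h with h | h
  · norm_num at h
  · exact h

/-- if G_{-1/2}v = Y_{-1/2}v = M_{-1/2}v = 0 and Y_p v = M_p v = 0 for all
positive p ∈ (1/2)ℤ, then Y_0 v = M_0 v = 0 and indeed Y_p v = M_p v = 0 for all p. -/
theorem all_YM_kill_of_pos' {W : Type} [AddCommGroup W] [Module ℂ W] (r : TsnsRep W)
    (v : W) (hG : r.ρ (.G (-1)) v = 0) (hY : r.ρ (.Y (-1)) v = 0)
    (hM : r.ρ (.M (-1)) v = 0)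
    (hpos : ∀ p : ℤ, 0 < p → r.ρ (.Y p) v = 0 ∧ r.ρ (.M p) v = 0) :
    (r.ρ (.Y 0) v = 0 ∧ r.ρ (.M 0) v = 0) ∧
    ∀ p : ℤ, r.ρ (.Y p) v = 0 ∧ r.ρ (.M p) v = 0 := by
  -- Y_0 v = 0
  have hY0 : r.ρ (.Y 0) v = 0 := by
    have h : ext r.ρ (bb (.G (-1)) (.Y 1)) v = 0 := by
      rw [comm_apply, (hpos 1 one_pos).1, hG]; simp
    rw [show bb (B.G (-1)) (B.Y 1) = (2:ℂ) • e (.Y 0) from by norm_num [bb], ext_smul_e] at h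
    exact two_smul_zero h
  -- M_0 v = 0
  have hM0 : r.ρ (.M 0) v = 0 := by
    have h : ext r.ρ (bb (.G (-1)) (.M 1)) v = 0 := by
      rw [comm_apply, (hpos 1 one_pos).2, hG]; simp
    rw [show bb (B.G (-1)) (B.M 1) = (2:ℂ) • e (.M 0) from by norm_num [bb], ext_smul_e] at h
    exact two_smul_zero h
  -- L_{-1} v = 0
  have hL : r.ρ (.L (-1)) v = 0 := by
    have h : ext r.ρ (bb (.G (-1)) (.G (-1))) v = 0 := by
      rw [comm_apply, hG]; simp
    rw [show bb (B.G (-1)) (B.G (-1)) = (2:ℂ) • e (.L (-1)) from by norm_num [bb],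
      ext_smul_e] at h
    exact two_smul_zero h
  -- M_{-1} step: M_{-2} v = 0
  have hM2 : r.ρ (.M (-2)) v = 0 := by
    have h : ext r.ρ (bb (.G (-1)) (.M (-1))) v = 0 := by
      rw [comm_apply, hM, hG]; simp
    rw [show bb (B.G (-1)) (B.M (-1)) = (2:ℂ) • e (.M (-2)) from by norm_num [bb],
      ext_smul_e] at h
    exact two_smul_zero h
  -- stepping down with L_{-1}
  have step_Y : ∀ p : ℤ, r.ρ (.Y p) v = 0 → r.ρ (.Y (p - 2)) v = 0 := by
    intro p hp
    have h : ext r.ρ (bb (.L (-1)) (.Y p)) v = 0 := by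
      rw [comm_apply, hp, hL]; simp
    rw [show bb (B.L (-1)) (B.Y p)
        = (if p % 2 = 0 then (p:ℂ)/2 + 1/2 else (p:ℂ)/2) • e (.Y (p - 2)) from by
          simp only [bb]
          norm_num [sub_eq_add_neg], ext_smul_e] at h
    simp only [LinearMap.smul_apply, smul_eq_zero] at h
    rcases h with h | h
    · exfalso
      by_cases hpar : p % 2 = 0 <;> simp only [hpar, if_true, if_false, if_pos, if_neg,
        reduceIte] at h
      · have hp1 : (p:ℂ) = -1 := by linear_combination 2 * h
        have : p = -1 := by exact_mod_cast hp1
        omega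
      · have hp1 : (p:ℂ) = 0 := by linear_combination 2 * h
        have : p = 0 := by exact_mod_cast hp1
        omega
    · exact h
  have step_M : ∀ p : ℤ, p ≠ 0 → p ≠ 1 → r.ρ (.M p) v = 0 → r.ρ (.M (p - 2)) v = 0 := by
    intro p hp0 hp1 hp
    have h : ext r.ρ (bb (.L (-1)) (.M p)) v = 0 := by
      rw [comm_apply, hp, hL]; simp
    rw [show bb (B.L (-1)) (B.M p)
        = (if p % 2 = 0 then (p:ℂ)/2 else (p:ℂ)/2 - 1/2) • e (.M (p - 2)) from by
          simp only [bb]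
          norm_num [sub_eq_add_neg], ext_smul_e] at h
    simp only [LinearMap.smul_apply, smul_eq_zero] at h
    rcases h with h | h
    · exfalso
      by_cases hpar : p % 2 = 0 <;> simp only [hpar, reduceIte] at h
      · have : (p:ℂ) = 0 := by linear_combination 2 * h
        exact hp0 (by exact_mod_cast this)
      · have : (p:ℂ) = 1 := by linear_combination 2 * h
        exact hp1 (by exact_mod_cast this)
    · exact h
  -- the four families
  have Yeven : ∀ n : ℕ, r.ρ (.Y (-(2 * (n:ℤ)))) v = 0 := by
    intro n; induction n with
    | zero => simpa using hY0
    | succ n ih =>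
      have h := step_Y _ ih
      have he : (-(2 * (n:ℤ)) - 2) = -(2 * ((n+1 : ℕ) : ℤ)) := by push_cast; ring
      rwa [he] at h
  have Yodd : ∀ n : ℕ, r.ρ (.Y (-1 - 2 * (n:ℤ))) v = 0 := by
    intro n; induction n with
    | zero => simpa using hY
    | succ n ih =>
      have h := step_Y _ ih
      have he : (-1 - 2 * (n:ℤ) - 2) = -1 - 2 * ((n+1 : ℕ) : ℤ) := by push_cast; ring
      rwa [he] at h
  have Modd : ∀ n : ℕ, r.ρ (.M (-1 - 2 * (n:ℤ))) v = 0 := by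
    intro n; induction n with
    | zero => simpa using hM
    | succ n ih =>
      have h := step_M _ (by omega) (by omega) ih
      have he : (-1 - 2 * (n:ℤ) - 2) = -1 - 2 * ((n+1 : ℕ) : ℤ) := by push_cast; ring
      rwa [he] at h
  have Meven : ∀ n : ℕ, r.ρ (.M (-2 - 2 * (n:ℤ))) v = 0 := by
    intro n; induction n with
    | zero => simpa using hM2
    | succ n ih =>
      have h := step_M _ (by omega) (by omega) ih
      have he : (-2 - 2 * (n:ℤ) - 2) = -2 - 2 * ((n+1 : ℕ) : ℤ) := by push_cast; ring
      rwa [he] at h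
  refine ⟨⟨hY0, hM0⟩, fun p => ?_⟩
  rcases lt_trichotomy 0 p with hp | hp | hp
  · exact hpos p hp
  · constructor
    · rw [← hp]; exact hY0
    · rw [← hp]; exact hM0
  · constructor
    · rcases Int.even_or_odd p with ⟨m, hm⟩ | ⟨m, hm⟩
      · have he : p = -(2 * (((-m).toNat : ℕ) : ℤ)) := by omega
        rw [he]; exact Yeven _
      · have he : p = -1 - 2 * (((-m - 1).toNat : ℕ) : ℤ) := by omega
        rw [he]; exact Yodd _
    · rcases Int.even_or_odd p with ⟨m, hm⟩ | ⟨m, hm⟩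
      · have he : p = -2 - 2 * (((-m - 1).toNat : ℕ) : ℤ) := by omega
        rw [he]; exact Meven _
      · have he : p = -1 - 2 * (((-m - 1).toNat : ℕ) : ℤ) := by omega
        rw [he]; exact Modd _
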